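/- arXiv:1610.00888 — 2 statements merged into one kernel-verified Lean document; each statement's English description precedes it below -/
import Mathlib

section
/- Generalized Gordan theorem for functionals: Let E be a real normed space, Λ a nonempty set, and for each λ ∈ Λ let x_λ* ∈ E* be a continuous linear functional such that {x_λ* : λ ∈ Λ} is norm-bounded in E*. Then there exists x ∈ E with sup_{λ∈Λ} x_λ*(x) < 0 if and only if there is no positive linear functional L on ℓ^∞(Λ) with L(𝟏) = 1 satisfying L({x_λ*(x)}_{λ∈Λ}) = 0 for every x ∈ E. -/
/-!
Write `sup Φ` for the supremum of `Φ ∈ ℓ^∞(Λ)`. A positive linear functional `L` with `L 𝟏 = 1`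
satisfies `L ≤ sup`, so it cannot vanish on `F x` when `sup (F x) < 0`. Conversely, if
`sup (F x) ≥ 0` for every `x`, the functional `F x + c • 𝟏 ↦ c` on `range F + ℝ 𝟏` is dominated by
the sublinear functional `sup`, and any Hahn–Banach extension dominated by `sup` is positive,
normalized and vanishes on `range F`.
-/

open scoped ENNReal

noncomputable def lpinfOne (Λ : Type*) : lp (fun _ : Λ => ℝ) ∞ :=
  ⟨fun _ => (1 : ℝ), memℓp_infty ⟨1, by rintro x ⟨l, rfl⟩; simp⟩⟩

@[simp]
theorem lpinfOne_apply {Λ : Type*} (l : Λ) : lpinfOne Λ l = 1 := rfl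

theorem LinearMap.exists_comp_eq_of_le_sublinear {M F : Type*} [AddCommGroup M] [Module ℝ M]
    [AddCommGroup F] [Module ℝ F] (T : M →ₗ[ℝ] F) (q : M →ₗ[ℝ] ℝ) (N : F → ℝ)
    (N_hom : ∀ c : ℝ, 0 < c → ∀ x, N (c • x) = c * N x) (N_add : ∀ x y, N (x + y) ≤ N x + N y)
    (hq : ∀ v, q v ≤ N (T v)) :
    ∃ L : F →ₗ[ℝ] ℝ, L ∘ₗ T = q ∧ ∀ x, L x ≤ N x := by
  have N_zero : N 0 = 0 := by
    have h := N_hom 2 two_pos 0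
    rw [smul_zero] at h
    linarith
  have hker : LinearMap.ker T ≤ LinearMap.ker q := by
    intro v hv
    have h₁ := hq v
    have h₂ := hq (-v)
    rw [LinearMap.mem_ker] at hv ⊢
    rw [hv, N_zero] at h₁
    rw [map_neg, map_neg, hv, neg_zero, N_zero] at h₂
    linarith
  let f : F →ₗ.[ℝ] ℝ :=
    ⟨LinearMap.range T, (LinearMap.ker T).liftQ q hker ∘ₗ T.quotKerEquivRange.symm.toLinearMap⟩
  have hf : ∀ v, f ⟨T v, LinearMap.mem_range_self T v⟩ = q v := fun v => by
    have : (⟨T v, LinearMap.mem_range_self T v⟩ : LinearMap.range T) =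
        T.quotKerEquivRange (Submodule.Quotient.mk v) := by
      ext; rw [LinearMap.quotKerEquivRange_apply_mk]
    simp [f, this]
  obtain ⟨L, hLf, hLN⟩ := exists_extension_of_le_sublinear f N N_hom N_add
    (by rintro ⟨_, v, rfl⟩; exact (hf v).trans_le (hq v))
  exact ⟨L, LinearMap.ext fun v => (hLf _).trans (hf v), hLN⟩

section lpSup

variable {Λ : Type*}

noncomputable def lpSup (Φ : lp (fun _ : Λ => ℝ) ∞) : ℝ := ⨆ l, Φ l

theorem lp.bddAbove_range_apply (Φ : lp (fun _ : Λ => ℝ) ∞) :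
    BddAbove (Set.range fun l => Φ l) := by
  obtain ⟨C, hC⟩ := memℓp_infty_iff.mp Φ.2
  exact ⟨C, by rintro _ ⟨l, rfl⟩; exact (le_abs_self _).trans (hC ⟨l, rfl⟩)⟩

theorem le_lpSup (Φ : lp (fun _ : Λ => ℝ) ∞) (l : Λ) : Φ l ≤ lpSup Φ :=
  le_ciSup (lp.bddAbove_range_apply Φ) l

theorem lpSup_smul {c : ℝ} (hc : 0 ≤ c) (Φ : lp (fun _ : Λ => ℝ) ∞) :
    lpSup (c • Φ) = c * lpSup Φ := by
  simp only [lpSup, Real.mul_iSup_of_nonneg hc, lp.coeFn_smul, Pi.smul_apply, smul_eq_mul]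

theorem apply_le_lpSup {L : lp (fun _ : Λ => ℝ) ∞ →ₗ[ℝ] ℝ}
    (hpos : ∀ Φ : lp (fun _ : Λ => ℝ) ∞, (∀ l, 0 ≤ Φ l) → 0 ≤ L Φ) (hone : L (lpinfOne Λ) = 1)
    (Φ : lp (fun _ : Λ => ℝ) ∞) : L Φ ≤ lpSup Φ := by
  have := hpos (lpSup Φ • lpinfOne Λ - Φ) fun l => by
    simp only [lp.coeFn_sub, Pi.sub_apply, lp.coeFn_smul, Pi.smul_apply, lpinfOne_apply,
      smul_eq_mul, mul_one, sub_nonneg]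
    exact le_lpSup Φ l
  rwa [map_sub, map_smul, hone, smul_eq_mul, mul_one, sub_nonneg] at this

variable [Nonempty Λ]

theorem lpSup_le {Φ : lp (fun _ : Λ => ℝ) ∞} {c : ℝ} (h : ∀ l, Φ l ≤ c) : lpSup Φ ≤ c :=
  ciSup_le h

theorem lpSup_add_le (Φ Ψ : lp (fun _ : Λ => ℝ) ∞) : lpSup (Φ + Ψ) ≤ lpSup Φ + lpSup Ψ :=
  lpSup_le fun l => add_le_add (le_lpSup Φ l) (le_lpSup Ψ l)

theorem lpSup_add_smul_lpinfOne (Φ : lp (fun _ : Λ => ℝ) ∞) (c : ℝ) :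
    lpSup (Φ + c • lpinfOne Λ) = lpSup Φ + c := by
  simp only [lpSup, lp.coeFn_add, Pi.add_apply, lp.coeFn_smul, Pi.smul_apply, lpinfOne_apply,
    smul_eq_mul, mul_one]
  exact (ciSup_add (lp.bddAbove_range_apply Φ) c).symm

theorem coe_lpSup (Φ : lp (fun _ : Λ => ℝ) ∞) : (lpSup Φ : EReal) = ⨆ l, (Φ l : EReal) :=
  Monotone.map_ciSup_of_continuousAt continuous_coe_real_ereal.continuousAt
    EReal.coe_strictMono.monotone (lp.bddAbove_range_apply Φ)

theorem exists_positive_normalized_of_lpSup_nonneg {E : Type*} [AddCommGroup E] [Module ℝ E]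
    (A : E →ₗ[ℝ] lp (fun _ : Λ => ℝ) ∞) (hA : ∀ x, 0 ≤ lpSup (A x)) :
    ∃ L : lp (fun _ : Λ => ℝ) ∞ →ₗ[ℝ] ℝ,
      (∀ Φ : lp (fun _ : Λ => ℝ) ∞, (∀ l, 0 ≤ Φ l) → 0 ≤ L Φ) ∧
      L (lpinfOne Λ) = 1 ∧ ∀ x, L (A x) = 0 := by
  obtain ⟨L, hLT, hLN⟩ := LinearMap.exists_comp_eq_of_le_sublinear
    (A.coprod (LinearMap.toSpanSingleton ℝ _ (lpinfOne Λ))) (LinearMap.snd ℝ E ℝ) lpSup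
    (fun c hc => lpSup_smul hc.le) lpSup_add_le
    (by rintro ⟨x, c⟩; simpa [lpSup_add_smul_lpinfOne] using hA x)
  have hL : ∀ x c, L (A x + c • lpinfOne Λ) = c := fun x c => LinearMap.congr_fun hLT (x, c)
  refine ⟨L, fun Φ hΦ => ?_, by simpa using hL 0 1, fun x => by simpa using hL x 0⟩
  have : L (-Φ) ≤ 0 := (hLN _).trans (lpSup_le fun l => by simpa using hΦ l)
  rwa [map_neg, neg_nonpos] at this

end lpSup

theorem stmt5_general (E Λ : Type*) [NormedAddCommGroup E] [NormedSpace ℝ E] [Nonempty Λ]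
    (g : Λ → (E →L[ℝ] ℝ))
    (F : E → lp (fun _ : Λ => ℝ) ∞) (hF : ∀ x l, F x l = g l x) :
    (∃ x : E, (⨆ l, (g l x : EReal)) < 0) ↔
      ¬ ∃ L : lp (fun _ : Λ => ℝ) ∞ →ₗ[ℝ] ℝ,
          (∀ Φ : lp (fun _ : Λ => ℝ) ∞, (∀ l, 0 ≤ Φ l) → 0 ≤ L Φ) ∧
          L (lpinfOne Λ) = 1 ∧
          ∀ x : E, L (F x) = 0 := by
  let A : E →ₗ[ℝ] lp (fun _ : Λ => ℝ) ∞ :=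
    { toFun := F
      map_add' := fun x y => lp.ext <| funext fun l => by simp [hF]
      map_smul' := fun c x => lp.ext <| funext fun l => by simp [lp.coeFn_smul, hF] }
  have hsup : ∀ x, (⨆ l, (g l x : EReal)) < 0 ↔ lpSup (A x) < 0 := fun x => by
    rw [← EReal.coe_lt_coe_iff, EReal.coe_zero, coe_lpSup]
    simp [A, hF]
  simp only [hsup]
  refine ⟨fun ⟨x, hx⟩ ⟨L, hpos, hone, hann⟩ => ?_, fun h => ?_⟩
  · have hLx : L (A x) = 0 := hann x
    linarith [apply_le_lpSup hpos hone (A x)]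
  · by_contra! hx
    exact h (exists_positive_normalized_of_lpSup_nonneg A hx)

/-- Gordan's theorem for an arbitrary norm-bounded family of continuous linear
functionals on a real normed space: the system `sup_λ x_λ*(x) < 0` is solvable
iff no positive normalized linear functional `L` on `ℓ^∞(Λ)` annihilates the family. -/
theorem stmt5 (E Λ : Type*) [NormedAddCommGroup E] [NormedSpace ℝ E] [Nonempty Λ]
    (g : Λ → (E →L[ℝ] ℝ)) (hbdd : ∃ M : ℝ, ∀ l, ‖g l‖ ≤ M)
    (F : E → lp (fun _ : Λ => ℝ) ∞) (hF : ∀ x l, F x l = g l x) :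
    (∃ x : E, (⨆ l, (g l x : EReal)) < 0) ↔
      ¬ ∃ L : lp (fun _ : Λ => ℝ) ∞ →ₗ[ℝ] ℝ,
          (∀ Φ : lp (fun _ : Λ => ℝ) ∞, (∀ l, 0 ≤ Φ l) → 0 ≤ L Φ) ∧
          L (lpinfOne Λ) = 1 ∧
          ∀ x : E, L (F x) = 0 :=
  stmt5_general E Λ g F hF
end

section
/- Key inequality in the Z-matrix lemma: Let N ≥ 1, let A be an N×N real symmetric matrix, b ∈ ℝ^N, c ∈ ℝ such that the block matrix [[A, b],[b^T, 2c]] is a Z-matrix, and let q(x) = (1/2)x^T A x + b^T x + c. Then for all m ≥ 1, t in the probability simplex Δ_m, and x_1,…,x_m ∈ ℝ^N, defining x_0 ∈ ℝ^N_+ by (x_0)_k = sqrt(Σ_{j=1}^m t_j ((x_j)_k)^2), one has q(x_0) ≤ Σ_{j=1}^m t_j q(x_j). -/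
open Matrix

/-- A Z-matrix: a real symmetric matrix with nonpositive off-diagonal entries. -/
def IsZMatrix {n : Type*} [DecidableEq n] (M : Matrix n n ℝ) : Prop :=
  M.IsSymm ∧ ∀ i j, i ≠ j → M i j ≤ 0

/-!
With the weighted second moments `S k l = ∑ j, t j * (x j k * x j l)` and the mean
`μ k = ∑ j, t j * x j k`, the average is
`∑ j, t j * q (x j) = ½ ∑ k l, A k l * S k l + b ⬝ᵥ μ + c`.
The point `x₀` has `x₀ k * x₀ k = S k k`, and weighted Cauchy–Schwarz gives
`S k l ≤ x₀ k * x₀ l` and `μ k ≤ x₀ k`. Since the off-diagonal entries of `A` and all entries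
of `b` are nonpositive, each term of `q x₀` is bounded by the corresponding term of the average.
-/

open Finset

namespace IsZMatrix

variable {m n : Type*} [DecidableEq m] [DecidableEq n]
  {A : Matrix m m ℝ} {B : Matrix m n ℝ} {C : Matrix n m ℝ} {D : Matrix n n ℝ}

lemma fromBlocks₁₁_offDiag_nonpos (hZ : IsZMatrix (fromBlocks A B C D))
    {k l : m} (hkl : k ≠ l) : A k l ≤ 0 :=
  hZ.2 (.inl k) (.inl l) (by simpa using hkl)

lemma fromBlocks₁₂_nonpos (hZ : IsZMatrix (fromBlocks A B C D)) (k : m) (l : n) :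
    B k l ≤ 0 :=
  hZ.2 (.inl k) (.inr l) Sum.inl_ne_inr

end IsZMatrix

section WeightedMoments

variable {κ ι : Type*} [Fintype κ] [Fintype ι] {t : κ → ℝ}

lemma sum_mul_mul_le_sqrt_mul_sqrt (ht : ∀ j, 0 ≤ t j) (f g : κ → ℝ) :
    ∑ j, t j * (f j * g j) ≤ √(∑ j, t j * f j ^ 2) * √(∑ j, t j * g j ^ 2) := by
  have hsq : ∀ (h : κ → ℝ) j, (√(t j) * h j) ^ 2 = t j * h j ^ 2 := fun h j => by
    rw [mul_pow, Real.sq_sqrt (ht j)]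
  have hmul : ∀ j, √(t j) * f j * (√(t j) * g j) = t j * (f j * g j) := fun j => by
    rw [mul_mul_mul_comm, Real.mul_self_sqrt (ht j)]
  simpa only [hsq, hmul] using
    Real.sum_mul_le_sqrt_mul_sqrt univ (fun j => √(t j) * f j) (fun j => √(t j) * g j)

lemma sum_mul_le_sqrt_sum_mul_sq (ht : ∀ j, 0 ≤ t j) (ht1 : ∑ j, t j = 1) (f : κ → ℝ) :
    ∑ j, t j * f j ≤ √(∑ j, t j * f j ^ 2) := by
  simpa [ht1] using sum_mul_mul_le_sqrt_mul_sqrt ht f 1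

lemma dotProduct_mulVec_self_eq_sum (A : Matrix ι ι ℝ) (v : ι → ℝ) :
    v ⬝ᵥ A *ᵥ v = ∑ k, ∑ l, A k l * (v k * v l) := by
  simp only [dotProduct, mulVec, mul_sum]
  exact sum_congr rfl fun k _ => sum_congr rfl fun l _ => by ring

lemma sum_mul_dotProduct_mulVec (A : Matrix ι ι ℝ) (t : κ → ℝ) (x : κ → ι → ℝ) :
    ∑ j, t j * (x j ⬝ᵥ A *ᵥ x j) = ∑ k, ∑ l, A k l * ∑ j, t j * (x j k * x j l) := by
  simp only [dotProduct_mulVec_self_eq_sum, mul_sum]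
  rw [sum_comm]
  refine sum_congr rfl fun k _ => ?_
  rw [sum_comm]
  exact sum_congr rfl fun l _ => sum_congr rfl fun j _ => by ring

lemma sum_mul_dotProduct (b : ι → ℝ) (t : κ → ℝ) (x : κ → ι → ℝ) :
    ∑ j, t j * (b ⬝ᵥ x j) = b ⬝ᵥ fun k => ∑ j, t j * x j k := by
  simp only [dotProduct, mul_sum]
  rw [sum_comm]
  exact sum_congr rfl fun k _ => sum_congr rfl fun j _ => by ring

lemma dotProduct_mulVec_le_sum_mul_of_offDiag_nonpos {A S : Matrix ι ι ℝ}
    (hA : ∀ k l, k ≠ l → A k l ≤ 0) {u : ι → ℝ}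
    (hdiag : ∀ k, u k * u k = S k k) (hoff : ∀ k l, k ≠ l → S k l ≤ u k * u l) :
    u ⬝ᵥ A *ᵥ u ≤ ∑ k, ∑ l, A k l * S k l := by
  rw [dotProduct_mulVec_self_eq_sum]
  refine sum_le_sum fun k _ => sum_le_sum fun l _ => ?_
  rcases eq_or_ne k l with rfl | hkl
  · rw [hdiag]
  · exact mul_le_mul_of_nonpos_left (hoff k l hkl) (hA k l hkl)

end WeightedMoments

theorem stmt10_general (N : ℕ)
    (A : Matrix (Fin N) (Fin N) ℝ) (b : Fin N → ℝ) (c : ℝ)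
    (hZ : IsZMatrix (Matrix.fromBlocks A (Matrix.replicateCol (Fin 1) b)
      (Matrix.replicateRow (Fin 1) b) (Matrix.of fun _ _ => 2 * c)))
    (q : (Fin N → ℝ) → ℝ)
    (hq : ∀ x, q x = (1 / 2) * (x ⬝ᵥ A.mulVec x) + b ⬝ᵥ x + c)
    (m : ℕ) (t : Fin m → ℝ) (ht : ∀ j, 0 ≤ t j) (ht1 : (∑ j, t j) = 1)
    (x : Fin m → (Fin N → ℝ)) :
    q (fun k => Real.sqrt (∑ j, t j * (x j k) ^ 2)) ≤ ∑ j, t j * q (x j) := by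
  set x₀ : Fin N → ℝ := fun k => √(∑ j, t j * x j k ^ 2)
  have hx₀ : ∀ k, x₀ k * x₀ k = ∑ j, t j * (x j k * x j k) := fun k => by
    rw [Real.mul_self_sqrt (sum_nonneg fun j _ => mul_nonneg (ht j) (sq_nonneg _))]
    simp only [sq]
  have hquad : x₀ ⬝ᵥ A *ᵥ x₀ ≤ ∑ k, ∑ l, A k l * ∑ j, t j * (x j k * x j l) :=
    dotProduct_mulVec_le_sum_mul_of_offDiag_nonpos
      (fun _ _ => hZ.fromBlocks₁₁_offDiag_nonpos) hx₀
      (fun _ _ _ => sum_mul_mul_le_sqrt_mul_sqrt ht _ _)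
  have hlin : b ⬝ᵥ x₀ ≤ b ⬝ᵥ fun k => ∑ j, t j * x j k :=
    sum_le_sum fun k _ => mul_le_mul_of_nonpos_left (sum_mul_le_sqrt_sum_mul_sq ht ht1 _)
      (hZ.fromBlocks₁₂_nonpos k 0)
  calc q x₀ = 1 / 2 * (x₀ ⬝ᵥ A *ᵥ x₀) + b ⬝ᵥ x₀ + c := hq x₀
    _ ≤ 1 / 2 * ∑ k, ∑ l, A k l * ∑ j, t j * (x j k * x j l)
        + (b ⬝ᵥ fun k => ∑ j, t j * x j k) + c := by gcongr
    _ = ∑ j, t j * q (x j) := by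
      rw [← sum_mul_dotProduct_mulVec, ← sum_mul_dotProduct]
      simp only [hq, mul_add, sum_add_distrib, ← sum_mul, ht1, one_mul, mul_left_comm (t _),
        ← mul_sum]

/-- Key inequality for Z-matrix quadratic data: with `x₀` defined componentwise by
`(x₀)_k = sqrt(Σ_j t_j (x_j)_k²)`, one has `q(x₀) ≤ Σ_j t_j q(x_j)`. -/
theorem stmt10 (N : ℕ) (hN : 1 ≤ N)
    (A : Matrix (Fin N) (Fin N) ℝ) (b : Fin N → ℝ) (c : ℝ)
    (hZ : IsZMatrix (Matrix.fromBlocks A (Matrix.replicateCol (Fin 1) b)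
      (Matrix.replicateRow (Fin 1) b) (Matrix.of fun _ _ => 2 * c)))
    (q : (Fin N → ℝ) → ℝ)
    (hq : ∀ x, q x = (1 / 2) * (x ⬝ᵥ A.mulVec x) + b ⬝ᵥ x + c)
    (m : ℕ) (hm : 0 < m) (t : Fin m → ℝ) (ht : ∀ j, 0 ≤ t j) (ht1 : (∑ j, t j) = 1)
    (x : Fin m → (Fin N → ℝ)) :
    q (fun k => Real.sqrt (∑ j, t j * (x j k) ^ 2)) ≤ ∑ j, t j * q (x j) :=
  stmt10_general N A b c hZ q hq m t ht ht1 x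
end
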